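/- arXiv:1609.04610 — 4 statements merged into one kernel-verified Lean document; each statement's English description precedes it below -/
import Mathlib

section
/- Let D ⊂ ℂⁿ be bounded with diam(D) ≤ 1, let u be continuous on closure(D) with concave modulus of continuity ω, let 1 < C and fix a point z_j and radius r_j > 0 with ω(Cr_j) > 0. Define v_j(z) = max{u(z) + (2/log C) ω(Cr_j) log(|z−z_j|/(Cr_j)), u(z_j) − ω(Cr_j)} for |z−z_j| ≤ Cr_j. Then for all z in D with |z−z_j| ≤ r_j one has u(z) + (2/log C) ω(Cr_j) log(|z−z_j|/(Cr_j)) ≤ u(z_j) − ω(Cr_j), and hence v_j is constant equal to u(z_j) − ω(Cr_j) on D ∩ B(z_j, r_j). -/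
open Metric

noncomputable section

theorem stmt2 {n : ℕ} (D : Set (Fin n → ℂ)) (hDbd : Bornology.IsBounded D)
    (hdiam : Metric.diam D ≤ 1)
    (u : (Fin n → ℂ) → ℝ) (huc : ContinuousOn u (closure D))
    (ω : ℝ → ℝ) (hconc : ConcaveOn ℝ (Set.Ici 0) ω) (hmono : MonotoneOn ω (Set.Ici 0))
    (hω : ∀ z ∈ closure D, ∀ w ∈ closure D, |u z - u w| ≤ ω (dist z w))
    (C : ℝ) (hC : 1 < C) (zj : Fin n → ℂ) (hzj : zj ∈ closure D)
    (rj : ℝ) (hrj : 0 < rj) (hωpos : 0 < ω (C * rj)) :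
    (∀ z ∈ D, dist z zj ≤ rj → z ≠ zj →
      u z + (2 / Real.log C) * ω (C * rj) * Real.log (dist z zj / (C * rj)) ≤
        u zj - ω (C * rj)) ∧
    (∀ z ∈ D ∩ Metric.ball zj rj,
      (if z = zj then u zj - ω (C * rj)
       else max (u z + (2 / Real.log C) * ω (C * rj) * Real.log (dist z zj / (C * rj)))
         (u zj - ω (C * rj))) = u zj - ω (C * rj)) := by
  have hC0 : (0:ℝ) < C := lt_trans one_pos hC
  have hCrj : 0 < C * rj := mul_pos hC0 hrj
  have hlogC : 0 < Real.log C := Real.log_pos hC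
  have key : ∀ z ∈ D, dist z zj ≤ rj → z ≠ zj →
      u z + (2 / Real.log C) * ω (C * rj) * Real.log (dist z zj / (C * rj)) ≤
        u zj - ω (C * rj) := by
    intro z hz hdist hne
    have hzc : z ∈ closure D := subset_closure hz
    have hd0 : 0 < dist z zj := dist_pos.mpr hne
    -- u z ≤ u zj + ω (C * rj)
    have h1 : |u z - u zj| ≤ ω (dist z zj) := hω z hzc zj hzj
    have hrjC : rj ≤ C * rj := le_mul_of_one_le_left hrj.le hC.le
    have h2 : ω (dist z zj) ≤ ω (C * rj) :=
      hmono dist_nonneg (le_of_lt hCrj) (hdist.trans hrjC)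
    have hu : u z ≤ u zj + ω (C * rj) := by
      have := abs_le.mp h1
      linarith [this.2]
    -- log estimate
    have hlog : Real.log (dist z zj / (C * rj)) ≤ - Real.log C := by
      have : dist z zj / (C * rj) ≤ 1 / C := by
        rw [div_le_div_iff₀ hCrj hC0]
        calc dist z zj * C ≤ rj * C := by nlinarith
          _ = 1 * (C * rj) := by ring
      calc Real.log (dist z zj / (C * rj)) ≤ Real.log (1 / C) :=
            Real.log_le_log (div_pos hd0 hCrj) this
        _ = - Real.log C := by rw [one_div, Real.log_inv]
    have hcoef : 0 ≤ (2 / Real.log C) * ω (C * rj) :=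
      mul_nonneg (div_nonneg two_pos.le hlogC.le) hωpos.le
    have h3 : (2 / Real.log C) * ω (C * rj) * Real.log (dist z zj / (C * rj)) ≤
        (2 / Real.log C) * ω (C * rj) * (- Real.log C) :=
      mul_le_mul_of_nonneg_left hlog hcoef
    have h4 : (2 / Real.log C) * ω (C * rj) * (- Real.log C) = -2 * ω (C * rj) := by
      field_simp
    linarith
  refine ⟨key, ?_⟩
  intro z hz
  by_cases h : z = zj
  · simp [h]
  · rw [if_neg h]
    exact max_eq_right (key z hz.1 (le_of_lt hz.2) h)
end
end

section
/- The set X = {1/j : j ∈ ℕ, j ≥ 1} ⊂ ℝ satisfies property PS(2, t^α) for every α > 0: for each ε > 0 there is a family of intervals (balls in ℝ) B(z_j, r_j) covering X, with B(z_j, r_j) ∩ B(z_k, 2 r_k) = ∅ for j ≠ k, and ∑_j r_j^α < ε. -/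
/-!
Centre the `j`-th ball at `1/(j+1)`. Every later point lies at distance at least
`1/((j+1)(j+2))` from it, so radii that decrease in `j` and are at most a third of that gap
make each ball disjoint from the doubled balls of all other points. Capping the radii further
by `c·2⁻ʲ` makes `∑ rⱼ^α` a geometric series bounded by `c^α / (1 - 2^(-α))`, which is small
for small `c`.
-/

open Metric

theorem disjoint_ball_ball_mul_of_antitone {ι X : Type*} [LinearOrder ι] [PseudoMetricSpace X]
    {z : ι → X} {r : ι → ℝ} {C : ℝ} (hC : 0 ≤ C) (hr : Antitone r)
    (hsep : ∀ j k, j < k → (1 + C) * r j ≤ dist (z j) (z k)) {j k : ι} (hjk : j ≠ k) :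
    Disjoint (ball (z j) (r j)) (ball (z k) (C * r k)) := by
  apply ball_disjoint_ball
  rcases hjk.lt_or_gt with h | h
  · nlinarith [hr h.le, hsep j k h]
  · rw [dist_comm]
    nlinarith [hr h.le, hsep k j h]

theorem inv_mul_succ_le_dist_inv_succ {j k : ℕ} (hjk : j < k) :
    (((j : ℝ) + 1) * ((j : ℝ) + 2))⁻¹ ≤ dist ((j + 1 : ℝ)⁻¹) ((k + 1 : ℝ)⁻¹) := by
  have hjk' : (j : ℝ) + 2 ≤ k + 1 := by exact_mod_cast Nat.succ_le_succ hjk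
  calc (((j : ℝ) + 1) * ((j : ℝ) + 2))⁻¹ = (j + 1 : ℝ)⁻¹ - (j + 2 : ℝ)⁻¹ := by
        field_simp
        ring
    _ ≤ (j + 1 : ℝ)⁻¹ - (k + 1 : ℝ)⁻¹ := by gcongr
    _ ≤ dist ((j + 1 : ℝ)⁻¹) ((k + 1 : ℝ)⁻¹) := by
      rw [Real.dist_eq]; exact le_abs_self _

theorem hasSum_mul_pow_rpow {c ρ α : ℝ} (hc : 0 ≤ c) (hρ : 0 ≤ ρ) (hρ1 : ρ < 1) (hα : 0 < α) :
    HasSum (fun j : ℕ => (c * ρ ^ j) ^ α) (c ^ α * (1 - ρ ^ α)⁻¹) := by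
  have hgeom := hasSum_geometric_of_lt_one (Real.rpow_nonneg hρ α) (Real.rpow_lt_one hρ hρ1 hα)
  have hterm (j : ℕ) : (c * ρ ^ j) ^ α = c ^ α * (ρ ^ α) ^ j := by
    rw [Real.mul_rpow hc (pow_nonneg hρ j), Real.rpow_pow_comm hρ]
  simpa only [hterm] using hgeom.mul_left (c ^ α)

theorem summable_rpow_and_tsum_le_of_le_geometric {r : ℕ → ℝ} {c ρ α : ℝ} (hc : 0 ≤ c)
    (hρ : 0 ≤ ρ) (hρ1 : ρ < 1) (hα : 0 < α) (hr : ∀ j, 0 ≤ r j) (hle : ∀ j, r j ≤ c * ρ ^ j) :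
    Summable (fun j => r j ^ α) ∧ ∑' j, r j ^ α ≤ c ^ α * (1 - ρ ^ α)⁻¹ := by
  have hgeom := hasSum_mul_pow_rpow hc hρ hρ1 hα
  have hbound : ∀ j, r j ^ α ≤ (c * ρ ^ j) ^ α := fun j =>
    Real.rpow_le_rpow (hr j) (hle j) hα.le
  have hsum : Summable (fun j => r j ^ α) :=
    hgeom.summable.of_nonneg_of_le (fun j => Real.rpow_nonneg (hr j) α) hbound
  exact ⟨hsum, hasSum_le hbound hsum.hasSum hgeom⟩

theorem exists_pos_rpow_lt {α δ : ℝ} (hα : 0 < α) (hδ : 0 < δ) : ∃ c, 0 < c ∧ c ^ α < δ :=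
  ⟨(δ / 2) ^ α⁻¹, by positivity, by rw [Real.rpow_inv_rpow (by positivity) hα.ne']; linarith⟩

theorem stmt14 (α : ℝ) (hα : 0 < α) :
    ∀ ε : ℝ, 0 < ε →
      ∃ z r : ℕ → ℝ, (∀ j, 0 < r j) ∧
        ({x : ℝ | ∃ j : ℕ, 1 ≤ j ∧ x = 1 / j} ⊆ ⋃ j, Metric.ball (z j) (r j)) ∧
        (∀ j k, j ≠ k → Disjoint (Metric.ball (z j) (r j)) (Metric.ball (z k) (2 * r k))) ∧
        Summable (fun j => r j ^ α) ∧ ∑' j, r j ^ α < ε := by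
  intro ε hε
  have hq : (1 / 2 : ℝ) ^ α < 1 := Real.rpow_lt_one (by norm_num) (by norm_num) hα
  obtain ⟨c, hc, hcε⟩ := exists_pos_rpow_lt hα (mul_pos hε (sub_pos.2 hq))
  set z : ℕ → ℝ := fun j => (j + 1 : ℝ)⁻¹
  set r : ℕ → ℝ := fun j => min ((((j : ℝ) + 1) * ((j : ℝ) + 2))⁻¹ / 3) (c * (1 / 2) ^ j)
  have hr_pos : ∀ j, 0 < r j := fun j => by positivity
  have hr_anti : Antitone r :=
    Antitone.min (fun _ _ hab => by gcongr) fun _ _ hab =>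
      mul_le_mul_of_nonneg_left (pow_le_pow_of_le_one (by norm_num) (by norm_num) hab) hc.le
  have hsep : ∀ j k, j < k → (1 + 2) * r j ≤ dist (z j) (z k) := fun j k hjk => by
    have := inv_mul_succ_le_dist_inv_succ hjk
    have := min_le_left ((((j : ℝ) + 1) * ((j : ℝ) + 2))⁻¹ / 3) (c * (1 / 2) ^ j)
    linarith
  have hcover : {x : ℝ | ∃ j : ℕ, 1 ≤ j ∧ x = 1 / j} ⊆ ⋃ j, ball (z j) (r j) := by
    rintro _ ⟨j, hj, rfl⟩
    refine Set.mem_iUnion.2 ⟨j - 1, ?_⟩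
    simp [z, Nat.cast_sub hj, hr_pos]
  obtain ⟨hsum, htsum⟩ := summable_rpow_and_tsum_le_of_le_geometric hc.le (by norm_num) (by norm_num)
    hα (fun j => (hr_pos j).le) (fun j => min_le_right _ _)
  refine ⟨z, r, hr_pos, hcover, fun j k hjk => disjoint_ball_ball_mul_of_antitone zero_le_two
    hr_anti hsep hjk, hsum, htsum.trans_lt ?_⟩
  rwa [← div_eq_mul_inv, div_lt_iff₀ (sub_pos.2 hq)]
end

section
/- The set Y = {0} ∪ {1/j : j ∈ ℕ, j ≥ 1} ⊂ ℝ does not satisfy property PS(C, t^α) for any C > 1 and any α > 0; in fact, no family of balls covering Y can simultaneously satisfy the proportional C-separation condition B(z_j, r_j) ∩ B(z_k, C r_k) = ∅ for j ≠ k while keeping ∑_j r_j^α arbitrarily small, because any ball covering 0 with small radius forces infinitely many points 1/j into separated balls whose radii cannot decay fast enough near 0. -/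
/-!
If the ball `B(z, r)` covering `0` is small, its right end `t = z + r` is small, and the first
point `1/n ≥ t` of `Y` lies within `t / (1 - t) - t ≈ t²` of it. That point is covered by another
ball of the family, which must avoid `B(z, C r)`; so `1/n ≥ z + C r = t + (C - 1) r`. As `t < 2 r`,
this forces `(C - 1) r ≲ t² ≲ r²`, i.e. `r ≳ C - 1`. Hence `∑ r_j^α ≥ r^α` stays bounded below.
-/

open Metric Set

def harmonicSet : Set ℝ := insert 0 {x | ∃ j : ℕ, 1 ≤ j ∧ x = 1 / j}

lemma exists_one_div_nat_mem_Ico {t : ℝ} (ht₀ : 0 < t) (ht₁ : t < 1) :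
    ∃ n : ℕ, 1 ≤ n ∧ t ≤ 1 / n ∧ 1 / n < t / (1 - t) := by
  have hinv : 1 ≤ 1 / t := by rw [le_div_iff₀ ht₀]; linarith
  refine ⟨⌊1 / t⌋₊, Nat.one_le_floor_iff _ |>.mpr hinv, ?_, ?_⟩
  · have hn : (0 : ℝ) < ⌊1 / t⌋₊ := by exact_mod_cast Nat.floor_pos.mpr hinv
    rw [le_div_iff₀ hn, ← le_div_iff₀' ht₀]
    exact Nat.floor_le (by positivity)
  · have hn : 1 / t - 1 < ⌊1 / t⌋₊ := Nat.sub_one_lt_floor _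
    have hn₀ : (0 : ℝ) < ⌊1 / t⌋₊ := by linarith
    rw [div_lt_div_iff₀ hn₀ (by linarith)]
    rw [div_sub_one ht₀.ne', div_lt_iff₀ ht₀] at hn
    linarith

lemma le_of_mem_of_disjoint_ball {a b r s x : ℝ} (hx : x ∈ ball a r)
    (hab : Disjoint (ball a r) (ball b s)) (hbx : b ≤ x) : b + s ≤ x := by
  have hxb : x ∉ ball b s := disjoint_left.mp hab hx
  rw [mem_ball, Real.dist_eq, abs_of_nonneg (by linarith)] at hxb
  linarith

lemma min_le_radius_of_zero_mem_ball {C : ℝ} {z r : ℕ → ℝ}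
    (hcov : harmonicSet ⊆ ⋃ j, ball (z j) (r j))
    (hsep : ∀ j k, j ≠ k → Disjoint (ball (z j) (r j)) (ball (z k) (C * r k)))
    {i : ℕ} (hi : (0 : ℝ) ∈ ball (z i) (r i)) :
    min ((C - 1) / 8) (1 / 4) ≤ r i := by
  by_contra! hsmall
  obtain ⟨hrC, hr₄⟩ := lt_min_iff.mp hsmall
  rw [mem_ball, dist_comm, Real.dist_eq, sub_zero, abs_lt] at hi
  set t := z i + r i
  have ht₀ : 0 < t := by linarith
  have ht₂ : t < 2 * r i := by linarith
  obtain ⟨n, hn, htn, hnt⟩ := exists_one_div_nat_mem_Ico ht₀ (by linarith)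
  obtain ⟨k, hk⟩ := mem_iUnion.mp (hcov (mem_insert_of_mem _ ⟨n, hn, rfl⟩))
  have hki : k ≠ i := by
    rintro rfl
    rw [mem_ball, Real.dist_eq, abs_lt] at hk
    linarith
  have hfar : z i + C * r i ≤ 1 / n :=
    le_of_mem_of_disjoint_ball hk (hsep k i hki) (by linarith)
  have hgap : (C - 1) * r i * (1 - t) < t ^ 2 := by
    have := hfar.trans_lt hnt
    rw [lt_div_iff₀ (by linarith)] at this
    nlinarith
  have hr₀ : 0 < r i := by linarith
  have hC : 0 < C - 1 := by linarith
  have : (C - 1) / 2 * r i < 4 * r i * r i :=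
    calc (C - 1) / 2 * r i ≤ (C - 1) * r i * (1 - t) := by nlinarith
      _ < t ^ 2 := hgap
      _ < 4 * r i * r i := by nlinarith
  have := lt_of_mul_lt_mul_right this hr₀.le
  linarith

theorem stmt15 (C : ℝ) (hC : 1 < C) (α : ℝ) (hα : 0 < α) :
    ¬ (∀ ε : ℝ, 0 < ε →
        ∃ z r : ℕ → ℝ, (∀ j, 0 < r j) ∧
          (insert (0:ℝ) {x : ℝ | ∃ j : ℕ, 1 ≤ j ∧ x = 1 / j} ⊆ ⋃ j, Metric.ball (z j) (r j)) ∧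
          (∀ j k, j ≠ k → Disjoint (Metric.ball (z j) (r j)) (Metric.ball (z k) (C * r k))) ∧
          Summable (fun j => r j ^ α) ∧ ∑' j, r j ^ α < ε) := by
  intro h
  set c := min ((C - 1) / 8) (1 / 4)
  have hc : 0 < c := lt_min (by linarith) (by norm_num)
  obtain ⟨z, r, hr, hcov, hsep, hsum, hlt⟩ := h (c ^ α) (by positivity)
  obtain ⟨i, hi⟩ := mem_iUnion.mp (hcov (mem_insert 0 _))
  have hri : c ^ α ≤ r i ^ α :=
    Real.rpow_le_rpow hc.le (min_le_radius_of_zero_mem_ball hcov hsep hi) hα.le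
  have hsum_ge : r i ^ α ≤ ∑' j, r j ^ α :=
    hsum.le_tsum i fun j _ => Real.rpow_nonneg (hr j).le α
  linarith
end

section
/- Let Ω ⊂ ℂⁿ be a bounded domain and suppose there exists a continuous function u on closure(Ω), harmonic (or plurisubharmonic) on Ω, that attains a strict interior-free maximum value 1 only on a compact subset of the boundary while u = 0 on another nonempty part of the boundary. If u were a uniform limit on closure(Ω) of functions plurisubharmonic on neighborhoods of closure(Ω), then u would satisfy the maximum principle on closure(Ω); in particular, any continuous function u on the closed disc Δ̄ of radius 2 in ℂ with u = 0 on {|z| = 2}, u = 1 on a compact polar-complement set C ⊂ (−1/2,1/2), and u harmonic off C, is not in PSH(closure(Δ \ C)) ∩ C(closure(Δ \ C)). -/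
open Metric MeasureTheory

noncomputable section

/-- A function `u` is subharmonic on `D ⊆ ℂ` if it is upper semicontinuous on `D` and
satisfies the sub-mean-value inequality over circles. -/
def SubharmonicOn (u : ℂ → ℝ) (D : Set ℂ) : Prop :=
  UpperSemicontinuousOn u D ∧
  ∀ z ∈ D, ∀ r : ℝ, 0 < r → (∀ t : ℂ, ‖t‖ ≤ r → z + t ∈ D) →
    u z ≤ (1 / (2 * Real.pi)) * ∫ θ in (0:ℝ)..(2 * Real.pi),
      u (z + (r : ℂ) * Complex.exp (θ * Complex.I))

/-!
A continuous function that is subharmonic near the closed disc `closedBall c r` attains its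
maximum over the disc on the circle: if `z` is a maximum point, the sub-mean-value inequality
on the circle of radius `r - ‖z - c‖` about `z` forces the function to equal its maximum on
that whole circle, which touches `sphere c r`.

Since `K` lies on the real axis, `closure D` is the closed disc of radius `2`. A function `v`
within `1/4` of `u` on it would be `≥ 3/4` on `K` but `≤ 1/4` on the circle of radius `2`,
contradicting this maximum principle.
-/

open Set Complex Real

theorem SubharmonicOn.mono {u : ℂ → ℝ} {D E : Set ℂ} (hu : SubharmonicOn u D) (hED : E ⊆ D) :
    SubharmonicOn u E :=
  ⟨hu.1.mono hED, fun z hz r hr hdisc => hu.2 z (hED hz) r hr fun t ht => hED (hdisc t ht)⟩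

theorem Complex.interior_setOf_im_eq (a : ℝ) : interior {z : ℂ | z.im = a} = ∅ := by
  show interior (im ⁻¹' {a}) = ∅
  simp [interior_preimage_im]

theorem closedBall_subset_closure_ball_diff {E : Type*} [NormedAddCommGroup E] [NormedSpace ℝ E]
    {K : Set E} (hK : interior K = ∅) (c : E) {r : ℝ} (hr : r ≠ 0) :
    closedBall c r ⊆ closure (ball c r \ K) := by
  rw [← closure_ball c hr, sdiff_eq]
  exact closure_minimal
    ((interior_eq_empty_iff_dense_compl.1 hK).open_subset_closure_inter isOpen_ball)
    isClosed_closure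

theorem eqOn_of_le_of_mul_le_intervalIntegral {f : ℝ → ℝ} {a b M : ℝ} (hab : a < b)
    (hf : ContinuousOn f (Icc a b)) (hle : ∀ x ∈ Icc a b, f x ≤ M)
    (hint : (b - a) * M ≤ ∫ x in a..b, f x) : EqOn f (fun _ => M) (Icc a b) := by
  intro x hx
  by_contra hne
  have hlt := intervalIntegral.integral_lt_integral_of_continuousOn_of_le_of_exists_lt hab hf
    continuousOn_const (fun y hy => hle y (Ioc_subset_Icc_self hy))
    ⟨x, hx, (hle x hx).lt_of_ne hne⟩
  rw [intervalIntegral.integral_const, smul_eq_mul] at hlt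
  linarith

theorem Complex.exists_mem_sphere_dist_eq_sub {c x : ℂ} {r : ℝ} (hx : dist x c ≤ r) :
    ∃ p ∈ sphere c r, dist p x = r - dist x c := by
  have hr : 0 ≤ r := dist_nonneg.trans hx
  have hpolar := norm_mul_exp_arg_mul_I (x - c)
  refine ⟨c + r * exp (arg (x - c) * I), ?_, ?_⟩
  · rw [mem_sphere, dist_eq_norm, add_sub_cancel_left, norm_mul, norm_exp_ofReal_mul_I,
      norm_real, Real.norm_of_nonneg hr, mul_one]
  · have hdiff : c + r * exp (arg (x - c) * I) - x
        = ((r - ‖x - c‖ : ℝ) : ℂ) * exp (arg (x - c) * I) := by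
      push_cast
      linear_combination hpolar
    rw [dist_eq_norm, hdiff, norm_mul, norm_exp_ofReal_mul_I, norm_real,
      Real.norm_of_nonneg (by rwa [← dist_eq_norm, sub_nonneg]), mul_one, dist_eq_norm]

theorem SubharmonicOn.eq_of_isMaxOn_of_mem_sphere {v : ℂ → ℝ} {D : Set ℂ} {z : ℂ} {s : ℝ}
    (hv : SubharmonicOn v D) (hs : 0 < s) (hsD : closedBall z s ⊆ D)
    (hvc : ContinuousOn v (closedBall z s)) (hmax : IsMaxOn v (closedBall z s) z)
    {w : ℂ} (hw : w ∈ sphere z s) : v w = v z := by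
  set f : ℝ → ℝ := fun θ => v (z + s * exp (θ * I)) with hf_def
  have hcircle (θ : ℝ) : z + s * exp (θ * I) ∈ closedBall z s := by
    rw [mem_closedBall, dist_eq_norm, add_sub_cancel_left, norm_mul, norm_exp_ofReal_mul_I,
      norm_real, Real.norm_of_nonneg hs.le, mul_one]
  have hf : Continuous f := hvc.comp_continuous (by fun_prop) hcircle
  have hper : Function.Periodic f (2 * π) := fun θ => by
    simp only [hf_def]
    push_cast
    exact congrArg (fun e => v (z + s * e)) (exp_mul_I_periodic (θ : ℂ))
  have hmean : (π - -π) * v z ≤ ∫ θ in -π..π, f θ := by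
    have h := hv.2 z (hsD (mem_closedBall_self hs.le)) s hs fun t ht =>
      hsD (by rwa [mem_closedBall, dist_eq_norm, add_sub_cancel_left])
    change v z ≤ 1 / (2 * π) * ∫ θ in (0 : ℝ)..2 * π, f θ at h
    -- integrate over `[-π, π]`, which contains the range of `arg`
    have hshift := hper.intervalIntegral_add_eq 0 (-π)
    rw [zero_add, show -π + 2 * π = π by ring] at hshift
    rw [hshift, div_mul_eq_mul_div, one_mul, le_div_iff₀ (by positivity)] at h
    linarith
  have hconst := eqOn_of_le_of_mul_le_intervalIntegral (by linarith [pi_pos]) hf.continuousOn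
    (fun θ _ => hmax (hcircle θ)) hmean
  have hpolar := norm_mul_exp_arg_mul_I (w - z)
  rw [← dist_eq_norm, mem_sphere.1 hw] at hpolar
  rw [show w = z + s * exp (arg (w - z) * I) by linear_combination -hpolar]
  exact hconst ⟨(neg_pi_lt_arg _).le, arg_le_pi _⟩

theorem SubharmonicOn.exists_mem_sphere_isMaxOn {v : ℂ → ℝ} {c : ℂ} {r : ℝ} (hr : 0 ≤ r)
    (hv : SubharmonicOn v (closedBall c r)) (hvc : ContinuousOn v (closedBall c r)) :
    ∃ p ∈ sphere c r, IsMaxOn v (closedBall c r) p := by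
  obtain ⟨z, hz, hmax⟩ :=
    (isCompact_closedBall c r).exists_isMaxOn (nonempty_closedBall.2 hr) hvc
  obtain ⟨p, hp, hpz⟩ := exists_mem_sphere_dist_eq_sub hz
  have hball : closedBall z (r - dist z c) ⊆ closedBall c r :=
    closedBall_subset_closedBall' (by linarith)
  have hvp : v p = v z := by
    rcases (sub_nonneg.2 (mem_closedBall.1 hz)).eq_or_lt with h0 | hpos
    · rw [← h0, dist_eq_zero] at hpz
      rw [hpz]
    · exact hv.eq_of_isMaxOn_of_mem_sphere hpos hball (hvc.mono hball)
        (hmax.on_subset hball) (mem_sphere.2 hpz)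
  exact ⟨p, hp, fun x hx => hvp ▸ hmax hx⟩

theorem stmt18_general (K : Set ℂ) (hKne : K.Nonempty)
    (hKsub : K ⊆ {z : ℂ | z.im = 0 ∧ |z.re| < 1 / 2})
    (D : Set ℂ) (hD : D = Metric.ball (0:ℂ) 2 \ K)
    (u : ℂ → ℝ)
    (hu0 : ∀ z ∈ Metric.sphere (0:ℂ) 2, u z = 0)
    (hu1 : ∀ z ∈ K, u z = 1) :
    ¬ (∀ ε : ℝ, 0 < ε → ∃ (V : Set ℂ) (v : ℂ → ℝ), IsOpen V ∧ closure D ⊆ V ∧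
        SubharmonicOn v V ∧ ContinuousOn v V ∧ ∀ z ∈ closure D, |u z - v z| ≤ ε) := by
  intro H
  obtain ⟨V, v, -, hDV, hv, hvc, happrox⟩ := H (1 / 4) (by norm_num)
  have hKint : interior K = ∅ := eq_empty_of_subset_empty <|
    (interior_mono fun z hz => (hKsub hz).1).trans (interior_setOf_im_eq 0).subset
  have hBD : closedBall (0 : ℂ) 2 ⊆ closure D := by
    rw [hD]
    exact closedBall_subset_closure_ball_diff hKint 0 two_ne_zero
  obtain ⟨p, hp, hpmax⟩ := (hv.mono (hBD.trans hDV)).exists_mem_sphere_isMaxOn zero_le_two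
    (hvc.mono (hBD.trans hDV))
  obtain ⟨k, hk⟩ := hKne
  have hkB : k ∈ closedBall (0 : ℂ) 2 := by
    rw [mem_closedBall_zero_iff, ← abs_re_eq_norm.2 (hKsub hk).1]
    linarith [(hKsub hk).2]
  have hvk : v k ≤ v p := hpmax hkB
  have hk' := abs_le.1 (happrox k (hBD hkB))
  have hp' := abs_le.1 (happrox p (hBD (sphere_subset_closedBall hp)))
  rw [hu1 k hk] at hk'
  rw [hu0 p hp] at hp'
  linarith [hk'.2, hp'.1]

theorem stmt18 (K : Set ℂ) (hKc : IsCompact K) (hKne : K.Nonempty)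
    (hKsub : K ⊆ {z : ℂ | z.im = 0 ∧ |z.re| < 1 / 2})
    (D : Set ℂ) (hD : D = Metric.ball (0:ℂ) 2 \ K)
    (u : ℂ → ℝ) (huc : ContinuousOn u (closure D))
    (hharm : SubharmonicOn u D ∧ SubharmonicOn (fun z => -u z) D)
    (hu0 : ∀ z ∈ Metric.sphere (0:ℂ) 2, u z = 0)
    (hu1 : ∀ z ∈ K, u z = 1) :
    ¬ (∀ ε : ℝ, 0 < ε → ∃ (V : Set ℂ) (v : ℂ → ℝ), IsOpen V ∧ closure D ⊆ V ∧
        SubharmonicOn v V ∧ ContinuousOn v V ∧ ∀ z ∈ closure D, |u z - v z| ≤ ε) :=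
  stmt18_general K hKne hKsub D hD u hu0 hu1
end
end
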